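/- Suppose real numbers μ, a_1, …, a_14 are such that the 8 × 8 symmetric matrix G(μ, a_1, …, a_14) has rank at most 3, 0.6 ≤ μ ≤ 0.64759, and |a_j| < μ for all 1 ≤ j ≤ 14. Then a_6 = (1 + μ − 4μ²)/(1 + μ), a_9 = −a_8, and a_8² = (1 + μ − 3μ² − μ³)/(2 + 4μ). -/

import Mathlib

/-!
Rank at most 3 forces every principal `4 × 4` minor of `G` to vanish, and three of these minors
involve only `μ`, `a₆`, `a₈`, `a₉`. With 1-based indices, the minor on `{2, 5, 6, 7}` factors as
`(μ - 1) (a₆ + 1) ((1 + μ) a₆ - (1 + μ - 4μ²))`, and the coherence bounds kill the first two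
factors. The minors on `{2, 3, 5, 7}` and `{3, 5, 6, 7}` differ by `4μ²(1 - μ)(a₈ + a₉)`. The
minor on `{2, 3, 5, 6}` reads `(1 - a₆²)(1 - a₈²) = 4μ²(1 - μ²)`, which determines `a₈²` once
`a₆` is known.
-/

/-- The `8 × 8` symmetric matrix `G(μ, a₁, …, a₁₄)` from the paper. -/
def packingGram (μ a1 a2 a3 a4 a5 a6 a7 a8 a9 a10 a11 a12 a13 a14 : ℝ) :
    Matrix (Fin 8) (Fin 8) ℝ :=
  !![1,  a1,  μ,  a2,  a3, -μ,  a4, -μ;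
     a1, 1,  -μ,  a5, -μ,  a6, -μ,  a7;
     μ, -μ,   1,   μ,  a8, -μ,  a9, a10;
     a2, a5,  μ,   1, a11, a12,  μ,   μ;
     a3, -μ, a8, a11,   1,   μ,  μ,  -μ;
     -μ, a6, -μ, a12,   μ,   1,  μ, a13;
     a4, -μ, a9,   μ,   μ,   μ,  1, a14;
     -μ, a7, a10,  μ,  -μ, a13, a14,  1]

theorem Matrix.det_submatrix_eq_zero_of_rank_lt {m n ι R : Type*} [Fintype n] [Fintype ι]
    [DecidableEq ι] [CommRing R] [IsDomain R] (A : Matrix m n R) (r : ι → m) (c : ι → n)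
    (h : A.rank < Fintype.card ι) : (A.submatrix r c).det = 0 := by
  by_contra hdet
  have := A.rank_submatrix_le r c
  rw [Matrix.rank_of_det_ne_zero hdet] at this
  omega

theorem Matrix.det_fin_four_of_symm_of_diag_one {R : Type*} [CommRing R] (p q r s t u : R) :
    !![1, p, q, r; p, 1, s, t; q, s, 1, u; r, t, u, 1].det =
      1 - (p ^ 2 + q ^ 2 + r ^ 2 + s ^ 2 + t ^ 2 + u ^ 2)
        + (p ^ 2 * u ^ 2 + q ^ 2 * t ^ 2 + r ^ 2 * s ^ 2)
        + 2 * (p * q * s + p * r * t + q * r * u + s * t * u)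
        - 2 * (p * q * t * u + p * r * s * u + q * r * s * t) := by
  rw [Matrix.det_succ_row_zero]
  simp [Fin.sum_univ_succ, Matrix.det_fin_three, Fin.succAbove]
  ring

section PackingGram

variable {μ a1 a2 a3 a4 a5 a6 a7 a8 a9 a10 a11 a12 a13 a14 : ℝ}

local notation "G" => packingGram μ a1 a2 a3 a4 a5 a6 a7 a8 a9 a10 a11 a12 a13 a14

theorem packingGram_det_minor_eq_zero (hrank : Matrix.rank G ≤ 3) {f : Fin 4 → Fin 8}
    {M : Matrix (Fin 4) (Fin 4) ℝ} (hM : Matrix.submatrix G f f = M) : M.det = 0 :=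
  hM ▸ Matrix.det_submatrix_eq_zero_of_rank_lt G f f (by simpa using Nat.lt_succ_of_le hrank)

theorem packingGram_a6_eq (hrank : Matrix.rank G ≤ 3) (hμ : μ < 1) (h6 : |a6| < μ) :
    a6 = (1 + μ - 4 * μ ^ 2) / (1 + μ) := by
  have hminor := packingGram_det_minor_eq_zero hrank (f := ![1, 4, 5, 6])
    (M := !![1, -μ, a6, -μ; -μ, 1, μ, μ; a6, μ, 1, μ; -μ, μ, μ, 1])
    (by ext i j; fin_cases i <;> fin_cases j <;> rfl)
  rw [Matrix.det_fin_four_of_symm_of_diag_one] at hminor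
  have hfactor : (μ - 1) * (a6 + 1) * ((1 + μ) * a6 - (1 + μ - 4 * μ ^ 2)) = 0 := by
    linear_combination hminor
  have ha6 := abs_lt.mp h6
  have hcoeff : (μ - 1) * (a6 + 1) ≠ 0 := mul_ne_zero (by linarith) (by linarith)
  rw [eq_div_iff (by linarith)]
  linarith [(mul_eq_zero.mp hfactor).resolve_left hcoeff]

theorem packingGram_a9_eq_neg_a8 (hrank : Matrix.rank G ≤ 3) (hμ0 : 0 < μ) (hμ : μ < 1) :
    a9 = -a8 := by
  have hminor₁ := packingGram_det_minor_eq_zero hrank (f := ![1, 2, 4, 6])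
    (M := !![1, -μ, -μ, -μ; -μ, 1, a8, a9; -μ, a8, 1, μ; -μ, a9, μ, 1])
    (by ext i j; fin_cases i <;> fin_cases j <;> rfl)
  have hminor₂ := packingGram_det_minor_eq_zero hrank (f := ![2, 4, 5, 6])
    (M := !![1, a8, -μ, a9; a8, 1, μ, μ; -μ, μ, 1, μ; a9, μ, μ, 1])
    (by ext i j; fin_cases i <;> fin_cases j <;> rfl)
  rw [Matrix.det_fin_four_of_symm_of_diag_one] at hminor₁ hminor₂
  have hfactor : 4 * μ ^ 2 * (1 - μ) * (a8 + a9) = 0 := by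
    linear_combination hminor₁ - hminor₂
  have hcoeff : 4 * μ ^ 2 * (1 - μ) ≠ 0 := by positivity
  linarith [(mul_eq_zero.mp hfactor).resolve_left hcoeff]

theorem packingGram_a8_sq_eq (hrank : Matrix.rank G ≤ 3) (hμ0 : 0 < μ) (hμ : μ < 1)
    (ha6 : a6 = (1 + μ - 4 * μ ^ 2) / (1 + μ)) :
    a8 ^ 2 = (1 + μ - 3 * μ ^ 2 - μ ^ 3) / (2 + 4 * μ) := by
  have hminor := packingGram_det_minor_eq_zero hrank (f := ![1, 2, 4, 5])
    (M := !![1, -μ, -μ, a6; -μ, 1, a8, -μ; -μ, a8, 1, μ; a6, -μ, μ, 1])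
    (by ext i j; fin_cases i <;> fin_cases j <;> rfl)
  rw [Matrix.det_fin_four_of_symm_of_diag_one] at hminor
  have hgram : (1 - a6 ^ 2) * (1 - a8 ^ 2) = 4 * μ ^ 2 * (1 - μ ^ 2) := by
    linear_combination hminor
  have h1a6 : (1 + μ) ^ 2 * (1 - a6 ^ 2) = 8 * μ ^ 2 * (1 - μ) * (1 + 2 * μ) := by
    rw [ha6]
    field_simp
    ring
  have hfactor : 4 * μ ^ 2 * (1 - μ) * ((2 + 4 * μ) * a8 ^ 2 - (1 + μ - 3 * μ ^ 2 - μ ^ 3)) = 0 := by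
    linear_combination (-(1 + μ) ^ 2) * hgram + (1 - a8 ^ 2) * h1a6
  have hcoeff : 4 * μ ^ 2 * (1 - μ) ≠ 0 := by positivity
  rw [eq_div_iff (by positivity)]
  linarith [(mul_eq_zero.mp hfactor).resolve_left hcoeff]

end PackingGram

theorem steps1and2_general
    (μ a1 a2 a3 a4 a5 a6 a7 a8 a9 a10 a11 a12 a13 a14 : ℝ)
    (hrank : (packingGram μ a1 a2 a3 a4 a5 a6 a7 a8 a9 a10 a11 a12 a13 a14).rank ≤ 3)
    (hμ2 : μ ≤ 0.64759)
    (h6 : |a6| < μ) :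
    a6 = (1 + μ - 4 * μ ^ 2) / (1 + μ) ∧ a9 = -a8 ∧ a8 ^ 2 = (1 + μ - 3 * μ ^ 2 - μ ^ 3) / (2 + 4 * μ) := by
  have hμ0 : 0 < μ := (abs_nonneg a6).trans_lt h6
  have hμ : μ < 1 := by norm_num at hμ2; linarith
  have ha6 := packingGram_a6_eq hrank hμ h6
  exact ⟨ha6, packingGram_a9_eq_neg_a8 hrank hμ0 hμ, packingGram_a8_sq_eq hrank hμ0 hμ ha6⟩

/-- **Steps 1 and 2 combined.** Under the rank-3 and coherence conditions on `G`, the coefficients `a₆`, `a₉` and `a₈²` are determined. -/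
theorem steps1and2
    (μ a1 a2 a3 a4 a5 a6 a7 a8 a9 a10 a11 a12 a13 a14 : ℝ)
    (hrank : (packingGram μ a1 a2 a3 a4 a5 a6 a7 a8 a9 a10 a11 a12 a13 a14).rank ≤ 3)
    (hμ1 : (0.6 : ℝ) ≤ μ) (hμ2 : μ ≤ 0.64759)
    (h1 : |a1| < μ) (h2 : |a2| < μ) (h3 : |a3| < μ) (h4 : |a4| < μ) (h5 : |a5| < μ)
    (h6 : |a6| < μ) (h7 : |a7| < μ) (h8 : |a8| < μ) (h9 : |a9| < μ) (h10 : |a10| < μ)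
    (h11 : |a11| < μ) (h12 : |a12| < μ) (h13 : |a13| < μ) (h14 : |a14| < μ) :
    a6 = (1 + μ - 4 * μ ^ 2) / (1 + μ) ∧ a9 = -a8 ∧ a8 ^ 2 = (1 + μ - 3 * μ ^ 2 - μ ^ 3) / (2 + 4 * μ) :=
  steps1and2_general μ a1 a2 a3 a4 a5 a6 a7 a8 a9 a10 a11 a12 a13 a14 hrank hμ2 h6
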